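/- arXiv:2007.06564 — 3 statements merged into one kernel-verified Lean document; each statement's English description precedes it below -/
import Mathlib

section
/- Lorenz values are superadditive: for probability vectors p and q on Fin d and reals λ₁, λ₂ ≥ 0 with λ₁ + λ₂ = 1, the function λ₁·p + λ₂·q is a probability vector and for every ℓ ∈ Fin d, L(λ₁·p + λ₂·q, ℓ) ≥ λ₁·L(p, ℓ) + λ₂·L(q, ℓ). -/
/-- A probability vector on `Fin d`: nonnegative entries summing to 1. -/
def IsProbVec {d : ℕ} (p : Fin d → ℝ) : Prop :=
  (∀ r, 0 ≤ p r) ∧ ∑ r, p r = 1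

/-- `π` is a sorting permutation for `p`: it arranges the values of `p` in ascending order. -/
def IsSortingPerm {d : ℕ} (p : Fin d → ℝ) (π : Equiv.Perm (Fin d)) : Prop :=
  ∀ k l : Fin d, k ≤ l → p (π k) ≤ p (π l)

/-- The Lorenz values of `p` computed with the sorting permutation `π`:
`L(p, ℓ) = ∑_{k=0}^{ℓ} p (π k)`. -/
def lorenz {d : ℕ} (p : Fin d → ℝ) (π : Equiv.Perm (Fin d)) (ℓ : Fin d) : ℝ :=
  ∑ k ∈ Finset.Iic ℓ, p (π k)

/-!
The mixture's Lorenz value at `ℓ` is the sum of the mixture over the `ℓ + 1` indices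
`πm 0, …, πm ℓ`, hence `λ₁` times the sum of `p` over that set plus `λ₂` times the sum of `q`.
The sum of any `ℓ + 1` entries of `p` is at least the sum of its `ℓ + 1` smallest ones, which is
`L(p, ℓ)`: exchanging an index outside `{πp 0, …, πp ℓ}` for one inside never increases the sum.
-/

open Finset

theorem Finset.sum_le_sum_of_card_eq_of_forall_sdiff_le {ι M : Type*} [AddCommMonoid M]
    [LinearOrder M] [IsOrderedCancelAddMonoid M] [DecidableEq ι] {s t : Finset ι} {f : ι → M}
    (hst : #s = #t) (h : ∀ a ∈ s \ t, ∀ b ∈ t \ s, f a ≤ f b) :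
    ∑ i ∈ s, f i ≤ ∑ i ∈ t, f i := by
  rw [← sum_sdiff_le_sum_sdiff]
  have hcard : #(s \ t) = #(t \ s) := card_sdiff_comm hst
  rcases (s \ t).eq_empty_or_nonempty with hempty | hne
  · rw [hempty, card_empty, eq_comm, card_eq_zero] at hcard
    simp [hempty, hcard]
  · calc ∑ i ∈ s \ t, f i ≤ #(s \ t) • (s \ t).sup' hne f :=
          sum_le_card_nsmul _ _ _ fun a ha => le_sup' f ha
      _ = #(t \ s) • (s \ t).sup' hne f := by rw [hcard]
      _ ≤ ∑ i ∈ t \ s, f i :=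
          card_nsmul_le_sum _ _ _ fun b hb => sup'_le _ _ fun a ha => h a ha b hb

theorem Monotone.sum_Iic_le_sum {α M : Type*} [LinearOrder α] [LocallyFiniteOrderBot α]
    [AddCommMonoid M] [LinearOrder M] [IsOrderedCancelAddMonoid M] {f : α → M}
    (hf : Monotone f) (a : α) {t : Finset α} (ht : #t = #(Iic a)) :
    ∑ x ∈ Iic a, f x ≤ ∑ x ∈ t, f x := by
  classical
  refine sum_le_sum_of_card_eq_of_forall_sdiff_le ht.symm fun x hx y hy => hf ?_
  simp only [mem_sdiff, mem_Iic] at hx hy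
  exact hx.1.trans (not_le.1 hy.2).le

theorem lorenz_le_lorenz {d : ℕ} {p : Fin d → ℝ} {π : Equiv.Perm (Fin d)}
    (hπ : IsSortingPerm p π) (σ : Equiv.Perm (Fin d)) (ℓ : Fin d) :
    lorenz p π ℓ ≤ lorenz p σ ℓ :=
  calc lorenz p π ℓ ≤ ∑ k ∈ (Iic ℓ).map (σ.trans π.symm).toEmbedding, p (π k) :=
        Monotone.sum_Iic_le_sum (fun _ _ => hπ _ _) ℓ (card_map _)
    _ = lorenz p σ ℓ := by simp [lorenz]

theorem lorenz_mul_add_mul {d : ℕ} (a b : ℝ) (p q : Fin d → ℝ) (σ : Equiv.Perm (Fin d))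
    (ℓ : Fin d) :
    lorenz (fun r => a * p r + b * q r) σ ℓ = a * lorenz p σ ℓ + b * lorenz q σ ℓ := by
  simp only [lorenz, sum_add_distrib, mul_sum]

theorem lorenz_superadditive_general {d : ℕ} (p q : Fin d → ℝ)
    (hp : IsProbVec p) (hq : IsProbVec q)
    (lam₁ lam₂ : ℝ) (h₁ : 0 ≤ lam₁) (h₂ : 0 ≤ lam₂) (hsum : lam₁ + lam₂ = 1)
    (πp πq πm : Equiv.Perm (Fin d))
    (hπp : IsSortingPerm p πp) (hπq : IsSortingPerm q πq) :
    IsProbVec (fun r => lam₁ * p r + lam₂ * q r) ∧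
    ∀ ℓ : Fin d,
      lorenz (fun r => lam₁ * p r + lam₂ * q r) πm ℓ ≥
        lam₁ * lorenz p πp ℓ + lam₂ * lorenz q πq ℓ := by
  -- `IsProbVec p` unfolds to `p ∈ stdSimplex ℝ (Fin d)`.
  refine ⟨convex_stdSimplex ℝ (Fin d) hp hq h₁ h₂ hsum, fun ℓ => ?_⟩
  rw [lorenz_mul_add_mul]
  have hp_le := lorenz_le_lorenz hπp πm ℓ
  have hq_le := lorenz_le_lorenz hπq πm ℓ
  gcongr

/-- Lorenz values are superadditive: for probability vectors `p` and `q` on `Fin d`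
and reals `λ₁, λ₂ ≥ 0` with `λ₁ + λ₂ = 1`, the function `λ₁·p + λ₂·q` is a probability vector and
for every `ℓ ∈ Fin d`, `L(λ₁·p + λ₂·q, ℓ) ≥ λ₁·L(p, ℓ) + λ₂·L(q, ℓ)`
(with the Lorenz values of each vector computed via any sorting permutation for it). -/
theorem lorenz_superadditive {d : ℕ} (hd : 1 ≤ d) (p q : Fin d → ℝ)
    (hp : IsProbVec p) (hq : IsProbVec q)
    (lam₁ lam₂ : ℝ) (h₁ : 0 ≤ lam₁) (h₂ : 0 ≤ lam₂) (hsum : lam₁ + lam₂ = 1)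
    (πp πq πm : Equiv.Perm (Fin d))
    (hπp : IsSortingPerm p πp) (hπq : IsSortingPerm q πq)
    (hπm : IsSortingPerm (fun r => lam₁ * p r + lam₂ * q r) πm) :
    IsProbVec (fun r => lam₁ * p r + lam₂ * q r) ∧
    ∀ ℓ : Fin d,
      lorenz (fun r => lam₁ * p r + lam₂ * q r) πm ℓ ≥
        lam₁ * lorenz p πp ℓ + lam₂ * lorenz q πq ℓ :=
  lorenz_superadditive_general p q hp hq lam₁ lam₂ h₁ h₂ hsum πp πq πm hπp hπq
end

section
/- For every probability vector p on Fin d, the Gini index satisfies 0 ≤ G(p) ≤ (d − 1)/(d + 1). -/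
/-- The Gini index of `p`, computed with the sorting permutation `π`:
`G(p) = 1 − (2/(d+1)) · ∑_{ℓ=0}^{d−1} L(p, ℓ)`
(independent of the choice of sorting permutation). -/
noncomputable def gini {d : ℕ} (p : Fin d → ℝ) (π : Equiv.Perm (Fin d)) : ℝ :=
  1 - (2 / ((d : ℝ) + 1)) * ∑ ℓ : Fin d, lorenz p π ℓ

/-!
Exchanging the order of summation, `∑ ℓ, L(p, ℓ) = ∑ k, (d - k) · p (π k)`. The weights `d - k`
are at least `1`, so this sum is at least `∑ p = 1`; they decrease while `p ∘ π` increases, so by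
Chebyshev's sum inequality it is at most the mean weight `(d + 1) / 2` times `∑ p = 1`. These two
bounds are exactly `G(p) ≤ (d - 1)/(d + 1)` and `0 ≤ G(p)`.
-/

section WeightedSum

variable {𝕜 : Type*} [Field 𝕜] [LinearOrder 𝕜] [IsStrictOrderedRing 𝕜] {d : ℕ}

theorem sum_fin_card_sub_mul_two (d : ℕ) :
    (∑ k : Fin d, ((d : 𝕜) - k)) * 2 = d * (d + 1) := by
  induction d with
  | zero => simp
  | succ d ih =>
    rw [Fin.sum_univ_castSucc]
    simp only [Fin.val_castSucc, Fin.val_last, Nat.cast_succ]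
    have hshift : ∑ k : Fin d, ((d : 𝕜) + 1 - k) = ∑ k : Fin d, ((d : 𝕜) - k) + d := by
      simp [add_sub_right_comm, Finset.sum_add_distrib]
    rw [hshift]
    linear_combination ih

theorem sum_le_sum_card_sub_mul {q : Fin d → 𝕜} (hq : ∀ k, 0 ≤ q k) :
    ∑ k, q k ≤ ∑ k : Fin d, ((d : 𝕜) - k) * q k := by
  refine Finset.sum_le_sum fun k _ => le_mul_of_one_le_left (hq k) ?_
  have hk : (k : 𝕜) + 1 ≤ d := by exact_mod_cast k.isLt
  linarith

theorem sum_card_sub_mul_le_of_monotone {q : Fin d → 𝕜} (hq : Monotone q) :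
    ∑ k : Fin d, ((d : 𝕜) - k) * q k ≤ (d + 1) / 2 * ∑ k, q k := by
  rcases Nat.eq_zero_or_pos d with rfl | hd
  · simp
  have hanti : Antitone fun k : Fin d => (d : 𝕜) - k :=
    fun i j hij => sub_le_sub_left (by exact_mod_cast hij) _
  have hcheb := (hanti.antivary hq).card_mul_sum_le_sum_mul_sum
  have hsum : ∑ k : Fin d, ((d : 𝕜) - k) = d * ((d + 1) / 2) := by
    linear_combination (sum_fin_card_sub_mul_two (𝕜 := 𝕜) d) / 2
  rw [Fintype.card_fin, hsum, mul_assoc] at hcheb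
  exact le_of_mul_le_mul_left hcheb (by exact_mod_cast hd)

end WeightedSum

theorem sum_lorenz_eq_sum_card_sub_mul {d : ℕ} (p : Fin d → ℝ) (π : Equiv.Perm (Fin d)) :
    ∑ ℓ, lorenz p π ℓ = ∑ k : Fin d, ((d : ℝ) - k) * p (π k) := by
  simp only [lorenz]
  rw [Finset.sum_comm' (t' := Finset.univ) (s' := Finset.Ici) (by simp)]
  refine Finset.sum_congr rfl fun k _ => ?_
  rw [Finset.sum_const, Fin.card_Ici, nsmul_eq_mul, Nat.cast_sub k.isLt.le]

theorem one_le_sum_lorenz {d : ℕ} {p : Fin d → ℝ} (hp : IsProbVec p) (π : Equiv.Perm (Fin d)) :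
    1 ≤ ∑ ℓ, lorenz p π ℓ := by
  rw [sum_lorenz_eq_sum_card_sub_mul, ← hp.2, ← Equiv.sum_comp π p]
  exact sum_le_sum_card_sub_mul fun k => hp.1 (π k)

theorem sum_lorenz_le {d : ℕ} {p : Fin d → ℝ} (hp : IsProbVec p) {π : Equiv.Perm (Fin d)}
    (hπ : IsSortingPerm p π) : ∑ ℓ, lorenz p π ℓ ≤ ((d : ℝ) + 1) / 2 := by
  have h := sum_card_sub_mul_le_of_monotone (q := p ∘ π) hπ
  rwa [Function.comp_def, Equiv.sum_comp π p, hp.2, mul_one,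
    ← sum_lorenz_eq_sum_card_sub_mul] at h

theorem gini_nonneg_and_le_general {d : ℕ} (p : Fin d → ℝ) (hp : IsProbVec p)
    (π : Equiv.Perm (Fin d)) (hπ : IsSortingPerm p π) :
    0 ≤ gini p π ∧ gini p π ≤ ((d : ℝ) - 1) / ((d : ℝ) + 1) := by
  have hlow := one_le_sum_lorenz hp π
  have hupp := sum_lorenz_le hp hπ
  have hd : (0 : ℝ) < d + 1 := by positivity
  unfold gini
  constructor
  · rw [sub_nonneg, div_mul_eq_mul_div, div_le_one hd]
    linarith
  · rw [div_mul_eq_mul_div, sub_div' hd.ne', div_le_div_iff_of_pos_right hd]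
    linarith

/-- For every probability vector `p` on `Fin d`, the Gini index satisfies
`0 ≤ G(p) ≤ (d − 1)/(d + 1)`. -/
theorem gini_nonneg_and_le {d : ℕ} (hd : 1 ≤ d) (p : Fin d → ℝ) (hp : IsProbVec p)
    (π : Equiv.Perm (Fin d)) (hπ : IsSortingPerm p π) :
    0 ≤ gini p π ∧ gini p π ≤ ((d : ℝ) - 1) / ((d : ℝ) + 1) :=
  gini_nonneg_and_le_general p hp π hπ
end

section
/- For a probability vector p on Fin d, G(p) = (d − 1)/(d + 1) if and only if there exists a ∈ Fin d such that p r = 1 when r = a and p r = 0 otherwise. -/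
open Finset

theorem gini_eq_iff_sum_lorenz_eq_one {d : ℕ} (p : Fin d → ℝ) (π : Equiv.Perm (Fin d)) :
    gini p π = ((d : ℝ) - 1) / ((d : ℝ) + 1) ↔ ∑ ℓ, lorenz p π ℓ = 1 := by
  have hd : (d : ℝ) + 1 ≠ 0 := by positivity
  rw [gini, div_mul_eq_mul_div, sub_eq_iff_eq_add, ← add_div, eq_div_iff hd]
  constructor <;> intro h <;> linarith

theorem lorenz_last {n : ℕ} (p : Fin (n + 1) → ℝ) (π : Equiv.Perm (Fin (n + 1))) :
    lorenz p π (Fin.last n) = ∑ r, p r := by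
  rw [lorenz, ← Fin.top_eq_last, Iic_top, Equiv.sum_comp π p]

theorem lorenz_eq_zero_iff {d : ℕ} {p : Fin d → ℝ} (hp : ∀ r, 0 ≤ p r) (π : Equiv.Perm (Fin d))
    (ℓ : Fin d) : lorenz p π ℓ = 0 ↔ ∀ k ≤ ℓ, p (π k) = 0 := by
  simp only [lorenz, sum_eq_zero_iff_of_nonneg fun k _ => hp (π k), mem_Iic]

theorem lorenz_nonneg {d : ℕ} {p : Fin d → ℝ} (hp : ∀ r, 0 ≤ p r) (π : Equiv.Perm (Fin d))
    (ℓ : Fin d) : 0 ≤ lorenz p π ℓ :=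
  sum_nonneg fun k _ => hp (π k)

theorem sum_lorenz_eq_one_iff {n : ℕ} {p : Fin (n + 1) → ℝ} (hp : IsProbVec p)
    (π : Equiv.Perm (Fin (n + 1))) :
    ∑ ℓ, lorenz p π ℓ = 1 ↔ ∀ i : Fin n, p (π i.castSucc) = 0 := by
  rw [Fin.sum_univ_castSucc, lorenz_last, hp.2, add_eq_right,
    sum_eq_zero_iff_of_nonneg fun i _ => lorenz_nonneg hp.1 π _]
  simp only [mem_univ, true_implies, lorenz_eq_zero_iff hp.1]
  refine ⟨fun h i => h i _ le_rfl, fun h i k hk => ?_⟩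
  obtain ⟨j, rfl⟩ := Fin.eq_castSucc_of_ne_last (ne_of_lt (hk.trans_lt (Fin.castSucc_lt_last i)))
  exact h j

theorem IsProbVec.eq_ite_of_forall_castSucc_eq_zero {n : ℕ} {p : Fin (n + 1) → ℝ}
    (hp : IsProbVec p) {π : Equiv.Perm (Fin (n + 1))} (h : ∀ i : Fin n, p (π i.castSucc) = 0) :
    ∀ r, p r = if r = π (Fin.last n) then 1 else 0 := by
  have hoff : ∀ r, r ≠ π (Fin.last n) → p r = 0 := by
    intro r hr
    obtain ⟨i, hi⟩ := Fin.eq_castSucc_of_ne_last (x := π.symm r) (by simpa [Equiv.symm_apply_eq])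
    simpa [hi] using h i
  intro r
  split_ifs with hr
  · rw [← hp.2, sum_eq_single r (fun s _ hs => hoff s (hr ▸ hs)) (by simp)]
  · exact hoff r hr

theorem IsSortingPerm.apply_last_eq_of_eq_ite {n : ℕ} {p : Fin (n + 1) → ℝ}
    {π : Equiv.Perm (Fin (n + 1))} (hπ : IsSortingPerm p π) {a : Fin (n + 1)}
    (ha : ∀ r, p r = if r = a then 1 else 0) : π (Fin.last n) = a := by
  have hle := hπ (π.symm a) (Fin.last n) (Fin.le_last _)
  rw [Equiv.apply_symm_apply, ha a, ha (π (Fin.last n))] at hle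
  by_contra hne
  norm_num [hne] at hle

/-- For a probability vector `p` on `Fin d`, `G(p) = (d − 1)/(d + 1)` if and only if
there exists `a ∈ Fin d` such that `p r = 1` when `r = a` and `p r = 0` otherwise. -/
theorem gini_eq_max_iff_point_mass {d : ℕ} (hd : 1 ≤ d) (p : Fin d → ℝ) (hp : IsProbVec p)
    (π : Equiv.Perm (Fin d)) (hπ : IsSortingPerm p π) :
    gini p π = ((d : ℝ) - 1) / ((d : ℝ) + 1) ↔
      ∃ a : Fin d, ∀ r : Fin d, p r = if r = a then 1 else 0 := by
  obtain ⟨n, rfl⟩ := Nat.exists_eq_add_of_le' hd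
  rw [gini_eq_iff_sum_lorenz_eq_one, sum_lorenz_eq_one_iff hp]
  constructor
  · exact fun h => ⟨π (Fin.last n), hp.eq_ite_of_forall_castSucc_eq_zero h⟩
  · rintro ⟨a, ha⟩ i
    rw [ha, if_neg]
    rw [← hπ.apply_last_eq_of_eq_ite ha]
    exact π.injective.ne (Fin.castSucc_ne_last i)
end
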